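/- arXiv:2503.08380 — 2 statements merged into one kernel-verified Lean document; each statement's English description precedes it below -/
import Mathlib

section
/- For every nonnegative integer n and every index 𝐤 = (k_1,…,k_r), one has ∑_{i=0}^{n} {}_iI_{n-i}(𝐤) = σ_n(I_0(𝐤)) in 𝓘, where I_0 = {}_0I_0. -/
/-- Indices: finite sequences of positive integers (modeled as lists of naturals). -/
abbrev Idx := List ℕ

/-- The ℚ-vector space 𝓘 on the set of indices. -/
abbrev Ical := Idx →₀ ℚ

/-- Auxiliary harmonic product on reversed lists (cons = append at the end). -/
noncomputable def harmAux : Idx → Idx → Ical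
  | [], l => Finsupp.single l 1
  | a :: k, [] => Finsupp.single (a :: k) 1
  | a :: k, b :: l =>
      Finsupp.mapDomain (a :: ·) (harmAux k (b :: l)) +
      Finsupp.mapDomain (b :: ·) (harmAux (a :: k) l) +
      Finsupp.mapDomain ((a + b) :: ·) (harmAux k l)
termination_by k l => k.length + l.length

/-- The harmonic (stuffle) product of two indices. -/
noncomputable def harm (k l : Idx) : Ical :=
  Finsupp.mapDomain List.reverse (harmAux k.reverse l.reverse)

/-- Bilinear extension of the harmonic product to 𝓘. -/
noncomputable def harmF (x y : Ical) : Ical :=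
  x.sum fun k c => y.sum fun l d => (c * d) • harm k l

/-- The map σₙ on indices. -/
noncomputable def sigma : ℕ → Idx → Ical
  | n, [] => if n = 0 then Finsupp.single [] 1 else 0
  | n, k :: ks =>
      ∑ a ∈ Finset.range (n + 1),
        ((k + a - 1).choose a : ℚ) •
          Finsupp.mapDomain (fun t => (k + a) :: t) (sigma (n - a) ks)

/-- Linear extension of σₙ to 𝓘. -/
noncomputable def sigmaL (n : ℕ) (x : Ical) : Ical :=
  x.sum fun k c => c • sigma n k

/-- The map ₘIₙ on indices. -/
noncomputable def mI (m n : ℕ) (ks : Idx) : Ical :=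
  ∑ i ∈ Finset.range (ks.length + 1),
    ((-1 : ℚ)) ^ ((ks.drop i).sum) •
      harmF (sigma m (ks.take i)) (sigma n ((ks.drop i).reverse))

/-- The index shuffle product ⧢̃ of two indices. -/
noncomputable def sh : Idx → Idx → Ical
  | [], l => Finsupp.single l 1
  | a :: k, [] => Finsupp.single (a :: k) 1
  | a :: k, b :: l =>
      Finsupp.mapDomain (a :: ·) (sh k (b :: l)) +
      Finsupp.mapDomain (b :: ·) (sh (a :: k) l)
termination_by k l => k.length + l.length

/-- The multiple zeta value of an index. -/
noncomputable def mzv (ks : List ℕ) : ℝ :=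
  ∑' f : {f : Fin ks.length → ℕ // StrictMono f ∧ ∀ i, 0 < f i},
    ∏ i, (1 / (f.1 i : ℝ) ^ ks.get i)

/-!
The maps σₙ form a Hasse–Schmidt derivation of the harmonic product:
σₙ(𝐤 * 𝐥) = ∑_{p+q=n} σ_p(𝐤) * σ_q(𝐥). On reversed indices `*` is computed by a recursion on
first letters, σ commutes with reversal, and σ expands a first letter `c` into
∑ᵢ C(c+i-1, i) (c+i). The rule then follows by induction on the total length, the stuffed
letter `a + b` being accounted for by the Vandermonde identity
C(a+b+s-1, s) = ∑_{i+j=s} C(a+i-1, i) C(b+j-1, j).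
Since σ₀ is the identity, I₀(𝐤) = ∑ᵢ ± (k₁,…,kᵢ) * (k_r,…,k_{i+1}), and the rule applied to each
summand gives the theorem term by term.
-/

open Finset

open PowerSeries in
theorem PowerSeries.coeff_mk_one_pow {S : Type*} [CommRing S] (d n : ℕ) :
    coeff n ((mk 1 : S⟦X⟧) ^ d) = d.multichoose n := by
  cases d with
  | zero => cases n <;> simp [coeff_one, Nat.multichoose_zero_right, Nat.multichoose_zero_succ]
  | succ d =>
    simp only [mk_one_pow_eq_mk_choose_add, coeff_mk, Nat.multichoose_eq, Nat.add_sub_cancel,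
      Nat.add_right_comm d 1 n]
    rw [Nat.choose_symm_add]

open PowerSeries in
theorem Nat.add_multichoose_eq (m n k : ℕ) :
    (m + n).multichoose k = ∑ ij ∈ antidiagonal k, m.multichoose ij.1 * n.multichoose ij.2 := by
  have h := coeff_mk_one_pow (S := ℤ) (m + n) k
  rw [pow_add, coeff_mul] at h
  simp only [coeff_mk_one_pow] at h
  exact_mod_cast h.symm

section
variable {M : Type*} [AddCommMonoid M]

theorem Finset.Nat.sum_antidiagonal_antidiagonal_assoc (n : ℕ) (f : ℕ → ℕ → ℕ → M) :
    ∑ p ∈ antidiagonal n, ∑ q ∈ antidiagonal p.2, f p.1 q.1 q.2 =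
      ∑ p ∈ antidiagonal n, ∑ q ∈ antidiagonal p.1, f q.1 q.2 p.2 := by
  simp_rw [Finset.sum_sigma']
  refine Finset.sum_nbij' (fun x => ⟨(x.1.1 + x.2.1, x.2.2), (x.1.1, x.2.1)⟩)
    (fun x => ⟨(x.2.1, x.2.2 + x.1.2), (x.2.2, x.1.2)⟩) ?_ ?_ ?_ ?_ ?_ <;>
  rintro ⟨⟨a, b⟩, ⟨c, d⟩⟩ h <;> simp_all [mem_sigma, HasAntidiagonal.mem_antidiagonal] <;> omega

theorem Finset.Nat.sum_antidiagonal_antidiagonal_left_comm (n : ℕ) (f : ℕ → ℕ → ℕ → M) :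
    ∑ p ∈ antidiagonal n, ∑ q ∈ antidiagonal p.2, f p.1 q.1 q.2 =
      ∑ p ∈ antidiagonal n, ∑ q ∈ antidiagonal p.2, f q.1 p.1 q.2 := by
  rw [sum_antidiagonal_antidiagonal_assoc,
    sum_antidiagonal_antidiagonal_assoc n fun a b c => f b a c]
  exact sum_congr rfl fun p _ => sum_antidiagonal_swap (f := fun q => f q.2 q.1 p.2)

theorem Finset.Nat.sum_antidiagonal_antidiagonal_interchange (n : ℕ)
    (f : ℕ → ℕ → ℕ → ℕ → M) :
    ∑ p ∈ antidiagonal n, ∑ u ∈ antidiagonal p.1, ∑ v ∈ antidiagonal p.2, f u.1 u.2 v.1 v.2 =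
      ∑ p ∈ antidiagonal n, ∑ u ∈ antidiagonal p.1, ∑ v ∈ antidiagonal p.2,
        f u.1 v.1 u.2 v.2 := by
  rw [← sum_antidiagonal_antidiagonal_assoc n fun i j m =>
      ∑ v ∈ antidiagonal m, f i j v.1 v.2,
    ← sum_antidiagonal_antidiagonal_assoc n fun i p m => ∑ v ∈ antidiagonal m, f i v.1 p v.2]
  exact sum_congr rfl fun p _ => sum_antidiagonal_antidiagonal_left_comm p.2 (f p.1)
end

noncomputable section

def bilinExt (f : Idx → Idx → Ical) : Ical →ₗ[ℚ] Ical →ₗ[ℚ] Ical :=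
  Finsupp.lsum ℚ fun k => LinearMap.toSpanSingleton ℚ _ <|
    Finsupp.lsum ℚ fun l => LinearMap.toSpanSingleton ℚ Ical (f k l)

@[simp] theorem bilinExt_single (f : Idx → Idx → Ical) (k l : Idx) (c d : ℚ) :
    bilinExt f (Finsupp.single k c) (Finsupp.single l d) = (c * d) • f k l := by
  simp [bilinExt, mul_smul]

theorem harmF_eq_bilinExt (x y : Ical) : harmF x y = bilinExt harm x y := by
  simp [harmF, bilinExt, Finsupp.lsum_apply, Finsupp.smul_sum, mul_smul]

def sigmaLin (n : ℕ) : Ical →ₗ[ℚ] Ical :=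
  Finsupp.lsum ℚ fun k => LinearMap.toSpanSingleton ℚ Ical (sigma n k)

@[simp] theorem sigmaLin_single (n : ℕ) (k : Idx) (c : ℚ) :
    sigmaLin n (Finsupp.single k c) = c • sigma n k := by
  simp [sigmaLin]

theorem sigmaL_eq_sigmaLin (n : ℕ) (x : Ical) : sigmaL n x = sigmaLin n x := rfl

def consLin (c : ℕ) : Ical →ₗ[ℚ] Ical := Finsupp.lmapDomain ℚ ℚ (c :: ·)

def snocLin (c : ℕ) : Ical →ₗ[ℚ] Ical := Finsupp.lmapDomain ℚ ℚ (· ++ [c])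

def reverseLin : Ical →ₗ[ℚ] Ical := Finsupp.lmapDomain ℚ ℚ List.reverse

@[simp] theorem consLin_single (c : ℕ) (k : Idx) (d : ℚ) :
    consLin c (Finsupp.single k d) = Finsupp.single (c :: k) d := by
  simp [consLin]

@[simp] theorem snocLin_single (c : ℕ) (k : Idx) (d : ℚ) :
    snocLin c (Finsupp.single k d) = Finsupp.single (k ++ [c]) d := by
  simp [snocLin]

@[simp] theorem reverseLin_single (k : Idx) (d : ℚ) :
    reverseLin (Finsupp.single k d) = Finsupp.single k.reverse d := by
  simp [reverseLin]

theorem consLin_snocLin (a b : ℕ) (x : Ical) :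
    consLin a (snocLin b x) = snocLin b (consLin a x) := by
  simp only [consLin, snocLin, Finsupp.lmapDomain_apply, ← Finsupp.mapDomain_comp]
  rfl

theorem reverseLin_consLin (a : ℕ) (x : Ical) :
    reverseLin (consLin a x) = snocLin a (reverseLin x) := by
  simp only [consLin, snocLin, reverseLin, Finsupp.lmapDomain_apply, ← Finsupp.mapDomain_comp]
  congr 1
  ext1 k
  simp

theorem sigma_zero (k : Idx) : sigma 0 k = Finsupp.single k 1 := by
  induction k with
  | nil => simp [sigma]
  | cons c k ih => simp [sigma, ih]

theorem sigma_cons (n c : ℕ) (k : Idx) :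
    sigma n (c :: k) =
      ∑ p ∈ antidiagonal n, (c.multichoose p.1 : ℚ) • consLin (c + p.1) (sigma p.2 k) := by
  rw [sigma, Nat.sum_antidiagonal_eq_sum_range_succ_mk]
  simp [Nat.multichoose_eq, consLin]

theorem sigmaLin_consLin (n c : ℕ) (x : Ical) :
    sigmaLin n (consLin c x) =
      ∑ p ∈ antidiagonal n, (c.multichoose p.1 : ℚ) • consLin (c + p.1) (sigmaLin p.2 x) := by
  have : sigmaLin n ∘ₗ consLin c = ∑ p ∈ antidiagonal n,
      (c.multichoose p.1 : ℚ) • consLin (c + p.1) ∘ₗ sigmaLin p.2 := by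
    ext k
    simp [sigma_cons]
  simpa using LinearMap.congr_fun this x

theorem snocLin_sigma_nil (c m : ℕ) : snocLin c (sigma m []) = consLin c (sigma m []) := by
  rw [sigma]
  split_ifs <;> simp

theorem sigma_append_singleton (n c : ℕ) (k : Idx) :
    sigma n (k ++ [c]) =
      ∑ p ∈ antidiagonal n, (c.multichoose p.1 : ℚ) • snocLin (c + p.1) (sigma p.2 k) := by
  induction k generalizing n with
  | nil => simp [sigma_cons, snocLin_sigma_nil]
  | cons d k ih =>
    simp only [List.cons_append, sigma_cons, ih, map_sum, map_smul, smul_sum, smul_smul]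
    rw [Nat.sum_antidiagonal_antidiagonal_left_comm n fun i j m =>
      ((d.multichoose i : ℚ) * c.multichoose j) • consLin (d + i) (snocLin (c + j) (sigma m k))]
    refine sum_congr rfl fun p _ => sum_congr rfl fun q _ => ?_
    rw [consLin_snocLin, mul_comm]

theorem sigma_reverse (n : ℕ) (k : Idx) : sigma n k.reverse = reverseLin (sigma n k) := by
  induction k generalizing n with
  | nil => rw [List.reverse_nil, sigma]; split_ifs <;> simp
  | cons c k ih => simp [sigma_append_singleton, sigma_cons, ih, reverseLin_consLin]

theorem sigmaLin_reverseLin (n : ℕ) (x : Ical) :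
    sigmaLin n (reverseLin x) = reverseLin (sigmaLin n x) := by
  have : sigmaLin n ∘ₗ reverseLin = reverseLin ∘ₗ sigmaLin n := by
    ext k
    simp [sigma_reverse]
  exact LinearMap.congr_fun this x

theorem reverseLin_bilinExt_harmAux (x y : Ical) :
    reverseLin (bilinExt harmAux (reverseLin x) (reverseLin y)) = bilinExt harm x y := by
  have : ((bilinExt harmAux).compl₁₂ reverseLin reverseLin).compr₂ reverseLin =
      bilinExt harm := by
    ext k l
    simp [harm, reverseLin]
  exact LinearMap.congr_fun₂ this x y

theorem bilinExt_harmAux_consLin_consLin (a b : ℕ) (x y : Ical) :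
    bilinExt harmAux (consLin a x) (consLin b y) =
      consLin a (bilinExt harmAux x (consLin b y)) +
        consLin b (bilinExt harmAux (consLin a x) y) + consLin (a + b) (bilinExt harmAux x y) := by
  have : (bilinExt harmAux).compl₁₂ (consLin a) (consLin b) =
      ((bilinExt harmAux).compl₂ (consLin b)).compr₂ (consLin a) +
        (bilinExt harmAux ∘ₗ consLin a).compr₂ (consLin b) +
        (bilinExt harmAux).compr₂ (consLin (a + b)) := by
    ext k l
    simp [harmAux, consLin]
  exact LinearMap.congr_fun₂ this x y

theorem bilinExt_harmAux_sum_consLin {ι κ : Type*} (s : Finset ι) (t : Finset κ) (α : ι → ℚ)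
    (β : κ → ℚ) (a : ι → ℕ) (b : κ → ℕ) (x : ι → Ical) (y : κ → Ical) :
    let X := ∑ i ∈ s, α i • consLin (a i) (x i)
    let Y := ∑ j ∈ t, β j • consLin (b j) (y j)
    bilinExt harmAux X Y =
      ∑ i ∈ s, α i • consLin (a i) (bilinExt harmAux (x i) Y) +
      ∑ j ∈ t, β j • consLin (b j) (bilinExt harmAux X (y j)) +
      ∑ i ∈ s, ∑ j ∈ t, (α i * β j) • consLin (a i + b j) (bilinExt harmAux (x i) (y j)) := by
  simp only [map_sum, map_smul, LinearMap.sum_apply, LinearMap.smul_apply,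
    bilinExt_harmAux_consLin_consLin, smul_add, sum_add_distrib, smul_sum, smul_smul]
  congr 1
  · congr 1
    rw [sum_comm]
    simp only [mul_comm]
  · rw [sum_comm]
    simp only [mul_comm]

theorem bilinExt_harmAux_sigmaLin_consLin (a b : ℕ) (x y : Ical) (P Q : ℕ) :
    bilinExt harmAux (sigmaLin P (consLin a x)) (sigmaLin Q (consLin b y)) =
      ∑ p ∈ antidiagonal P, (a.multichoose p.1 : ℚ) •
        consLin (a + p.1) (bilinExt harmAux (sigmaLin p.2 x) (sigmaLin Q (consLin b y))) +
      ∑ q ∈ antidiagonal Q, (b.multichoose q.1 : ℚ) •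
        consLin (b + q.1) (bilinExt harmAux (sigmaLin P (consLin a x)) (sigmaLin q.2 y)) +
      ∑ p ∈ antidiagonal P, ∑ q ∈ antidiagonal Q,
        ((a.multichoose p.1 : ℚ) * b.multichoose q.1) •
          consLin (a + p.1 + (b + q.1)) (bilinExt harmAux (sigmaLin p.2 x) (sigmaLin q.2 y)) := by
  have hx := sigmaLin_consLin P a x
  have hy := sigmaLin_consLin Q b y
  conv_lhs => rw [hx, hy, bilinExt_harmAux_sum_consLin, ← hx, ← hy]

def LeibnizAt (x y : Ical) : Prop :=
  ∀ n, sigmaLin n (bilinExt harmAux x y) =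
    ∑ p ∈ antidiagonal n, bilinExt harmAux (sigmaLin p.1 x) (sigmaLin p.2 y)

theorem sigmaLin_consLin_bilinExt_harmAux_left (a : ℕ) {x z : Ical} (h : LeibnizAt x z)
    (n : ℕ) :
    sigmaLin n (consLin a (bilinExt harmAux x z)) =
      ∑ P ∈ antidiagonal n, ∑ p ∈ antidiagonal P.1, (a.multichoose p.1 : ℚ) •
        consLin (a + p.1) (bilinExt harmAux (sigmaLin p.2 x) (sigmaLin P.2 z)) := by
  simp only [sigmaLin_consLin, h _, map_sum, smul_sum]
  exact Nat.sum_antidiagonal_antidiagonal_assoc n fun i p q =>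
    (a.multichoose i : ℚ) • consLin (a + i) (bilinExt harmAux (sigmaLin p x) (sigmaLin q z))

theorem sigmaLin_consLin_bilinExt_harmAux_right (b : ℕ) {w y : Ical} (h : LeibnizAt w y)
    (n : ℕ) :
    sigmaLin n (consLin b (bilinExt harmAux w y)) =
      ∑ P ∈ antidiagonal n, ∑ q ∈ antidiagonal P.2, (b.multichoose q.1 : ℚ) •
        consLin (b + q.1) (bilinExt harmAux (sigmaLin P.1 w) (sigmaLin q.2 y)) := by
  simp only [sigmaLin_consLin, h _, map_sum, smul_sum]
  exact Nat.sum_antidiagonal_antidiagonal_left_comm n fun j p q =>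
    (b.multichoose j : ℚ) • consLin (b + j) (bilinExt harmAux (sigmaLin p w) (sigmaLin q y))

theorem sigmaLin_consLin_add_bilinExt_harmAux (a b : ℕ) {x y : Ical} (h : LeibnizAt x y)
    (n : ℕ) :
    sigmaLin n (consLin (a + b) (bilinExt harmAux x y)) =
      ∑ P ∈ antidiagonal n, ∑ p ∈ antidiagonal P.1, ∑ q ∈ antidiagonal P.2,
        ((a.multichoose p.1 : ℚ) * b.multichoose q.1) •
          consLin (a + p.1 + (b + q.1)) (bilinExt harmAux (sigmaLin p.2 x) (sigmaLin q.2 y)) := by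
  rw [sigmaLin_consLin, ← Nat.sum_antidiagonal_antidiagonal_interchange n fun i j p q =>
    ((a.multichoose i : ℚ) * b.multichoose j) •
      consLin (a + i + (b + j)) (bilinExt harmAux (sigmaLin p x) (sigmaLin q y))]
  refine sum_congr rfl fun P _ => ?_
  simp only [h _, Nat.add_multichoose_eq, Nat.cast_sum, Nat.cast_mul, sum_smul, map_sum,
    smul_sum]
  rw [sum_comm]
  refine sum_congr rfl fun u hu => sum_congr rfl fun _ _ => ?_
  rw [← mem_antidiagonal.mp hu, show a + b + (u.1 + u.2) = a + u.1 + (b + u.2) by ring]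

theorem LeibnizAt.consLin_consLin {a b : ℕ} {x y : Ical} (h₁ : LeibnizAt x (consLin b y))
    (h₂ : LeibnizAt (consLin a x) y) (h₃ : LeibnizAt x y) :
    LeibnizAt (consLin a x) (consLin b y) := by
  intro n
  rw [bilinExt_harmAux_consLin_consLin, map_add, map_add,
    sigmaLin_consLin_bilinExt_harmAux_left a h₁, sigmaLin_consLin_bilinExt_harmAux_right b h₂,
    sigmaLin_consLin_add_bilinExt_harmAux a b h₃]
  simp only [bilinExt_harmAux_sigmaLin_consLin, sum_add_distrib]

theorem bilinExt_harmAux_nil_left (y : Ical) : bilinExt harmAux (Finsupp.single [] 1) y = y := by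
  have : bilinExt harmAux (Finsupp.single [] 1) = LinearMap.id := by
    ext l
    simp [harmAux]
  rw [this, LinearMap.id_apply]

theorem bilinExt_harmAux_nil_right (x : Ical) :
    bilinExt harmAux x (Finsupp.single [] 1) = x := by
  have : (bilinExt harmAux).flip (Finsupp.single [] 1) = LinearMap.id := by
    ext k
    cases k <;> simp [harmAux]
  rw [← LinearMap.flip_apply (bilinExt harmAux), this, LinearMap.id_apply]

theorem leibnizAt_nil_left (y : Ical) : LeibnizAt (Finsupp.single [] 1) y := by
  intro n
  rw [bilinExt_harmAux_nil_left, Nat.sum_antidiagonal_eq_sum_range_succ_mk, sum_range_succ']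
  simp [sigma, bilinExt_harmAux_nil_left]

theorem leibnizAt_nil_right (x : Ical) : LeibnizAt x (Finsupp.single [] 1) := by
  intro n
  rw [bilinExt_harmAux_nil_right, ← Nat.sum_antidiagonal_swap,
    Nat.sum_antidiagonal_eq_sum_range_succ_mk, sum_range_succ']
  simp [sigma, bilinExt_harmAux_nil_right]

theorem leibnizAt_single (k l : Idx) : LeibnizAt (Finsupp.single k 1) (Finsupp.single l 1) := by
  induction k, l using harmAux.induct with
  | case1 l => exact leibnizAt_nil_left _
  | case2 a k => exact leibnizAt_nil_right _
  | case3 a k b l h₁ h₂ h₃ =>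
    simp only [← consLin_single] at h₁ h₂ h₃ ⊢
    exact h₁.consLin_consLin h₂ h₃

theorem sigmaLin_harm (n : ℕ) (k l : Idx) :
    sigmaLin n (harm k l) = ∑ p ∈ antidiagonal n, bilinExt harm (sigma p.1 k) (sigma p.2 l) := by
  have : harm k l =
      reverseLin (bilinExt harmAux (Finsupp.single k.reverse 1) (Finsupp.single l.reverse 1)) := by
    simp [harm, reverseLin]
  rw [this, sigmaLin_reverseLin, leibnizAt_single, map_sum]
  refine sum_congr rfl fun p _ => ?_
  rw [← reverseLin_bilinExt_harmAux]
  simp [sigma_reverse]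

end

theorem sum_mI_eq_sigmaL_I0_general (n : ℕ) (ks : Idx) :
    ∑ i ∈ Finset.range (n + 1), mI i (n - i) ks = sigmaL n (mI 0 0 ks) := by
  simp only [mI, sigmaL_eq_sigmaLin, map_sum, map_smul]
  rw [sum_comm]
  refine sum_congr rfl fun i _ => ?_
  rw [← smul_sum, sigma_zero, sigma_zero, harmF_eq_bilinExt, bilinExt_single, one_mul, one_smul,
    sigmaLin_harm, Nat.sum_antidiagonal_eq_sum_range_succ_mk]
  simp only [harmF_eq_bilinExt]

/-- ∑_{i=0}^{n} ᵢI_{n-i}(𝐤) = σₙ(I₀(𝐤)). -/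
theorem sum_mI_eq_sigmaL_I0 (n : ℕ) (ks : Idx) (hks : ∀ x ∈ ks, 0 < x) :
    ∑ i ∈ Finset.range (n + 1), mI i (n - i) ks = sigmaL n (mI 0 0 ks) :=
  sum_mI_eq_sigmaL_I0_general n ks
end

section
/- For positive integers k and n, one has σ_2({k}^n) = (k(k+1)/2) ∑_{i=0}^{n-1} (-1)^i (k(i+1)+2) * ({k}^{n-i-1}) + k^2 ∑_{i,j≥0, i+j≤n-2} (-1)^{i+j} (k(i+1)+1, k(j+1)+1) * ({k}^{n-i-j-2}) in 𝓘. -/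
/-!
Expanding the definition, `σ₂({k}ⁿ)` is `k(k+1)/2` times the sum of the indices obtained from
`{k}ⁿ` by replacing one entry by `k+2`, plus `k²` times the sum of those obtained by replacing two
entries by `k+1`. On the other side, `[c] * {k}ᵐ` is the sum of all insertions of `c` into `{k}ᵐ`
plus the sum of all ways to replace one `k` by `c+k`; so in the alternating sum
`∑ᵢ (-1)ⁱ [c+ik] * {k}^(n-1-i)` the second kind of terms cancel against the first kind of the next
summand and only the insertions of `c` into `{k}^(n-1)` survive. The same telescoping in the last
entry `b` of `[a,b] * {k}ᵐ` reduces the double sum to single sums of the first kind, each followed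
by `(k+1, {k}ˢ)`.
-/

open Finset Finsupp

theorem sum_range_neg_one_pow_smul_telescope {R M : Type*} [Ring R] [AddCommGroup M] [Module R M]
    (d : ℕ) (F G : ℕ → ℕ → M)
    (hG : ∀ c, G c 0 = 0) (hFG : ∀ c m, F c m = G c (m + 1) + G (c + d) m) (c n : ℕ) :
    ∑ i ∈ range n, (-1 : R) ^ i • F (c + i * d) (n - 1 - i) = G c n := by
  induction n generalizing c with
  | zero => simp [hG]
  | succ n ih =>
    have hshift : ∀ i ∈ range n, (-1 : R) ^ (i + 1) • F (c + (i + 1) * d) (n - (i + 1))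
        = -((-1 : R) ^ i • F (c + d + i * d) (n - 1 - i)) := by
      intro i _
      rw [pow_succ, mul_neg_one, neg_smul, show c + (i + 1) * d = c + d + i * d by ring,
        show n - (i + 1) = n - 1 - i by omega]
    rw [sum_range_succ', Nat.add_sub_cancel, sum_congr rfl hshift, sum_neg_distrib, ih, hFG]
    simp

theorem harm_nil_left (l : Idx) : harm [] l = single l 1 := by
  simp [harm, harmAux, mapDomain_single]

theorem harm_nil_right (l : Idx) : harm l [] = single l 1 := by
  rw [harm]
  rcases h : l.reverse with _ | ⟨a, k⟩
  · simp_all [harmAux, mapDomain_single]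
  · rw [List.reverse_nil, harmAux.eq_2, mapDomain_single, ← h, List.reverse_reverse]

theorem mapDomain_reverse_mapDomain_cons (a : ℕ) (v : Ical) :
    mapDomain List.reverse (mapDomain (a :: ·) v)
      = mapDomain (· ++ [a]) (mapDomain List.reverse v) := by
  simp only [← mapDomain_comp]
  congr 1
  funext l
  simp

theorem harm_append_singleton (l m : Idx) (a b : ℕ) :
    harm (l ++ [a]) (m ++ [b])
      = mapDomain (· ++ [a]) (harm l (m ++ [b])) + mapDomain (· ++ [b]) (harm (l ++ [a]) m)
        + mapDomain (· ++ [a + b]) (harm l m) := by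
  simp only [harm, List.reverse_append, List.reverse_singleton, List.singleton_append]
  rw [harmAux.eq_3]
  simp only [mapDomain_add, mapDomain_reverse_mapDomain_cons]

noncomputable def insertSum (k c n : ℕ) : Ical :=
  ∑ p ∈ range n, single (List.replicate p k ++ c :: List.replicate (n - 1 - p) k) 1

theorem insertSum_zero (k c : ℕ) : insertSum k c 0 = 0 := by
  simp [insertSum]

theorem insertSum_succ (k c n : ℕ) :
    insertSum k c (n + 1)
      = mapDomain (k :: ·) (insertSum k c n) + single (c :: List.replicate n k) 1 := by
  rw [insertSum, sum_range_succ', insertSum, mapDomain_finsetSum]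
  congr 1
  refine sum_congr rfl fun p _ => ?_
  rw [mapDomain_single, List.replicate_succ, List.cons_append,
    show n + 1 - 1 - (p + 1) = n - 1 - p by omega]

theorem insertSum_succ' (k c n : ℕ) :
    insertSum k c (n + 1)
      = mapDomain (· ++ [k]) (insertSum k c n) + single (List.replicate n k ++ [c]) 1 := by
  rw [insertSum, sum_range_succ, insertSum, mapDomain_finsetSum, Nat.add_sub_cancel, Nat.sub_self]
  congr 1
  refine sum_congr rfl fun p hp => ?_
  rw [mapDomain_single, show n - p = n - 1 - p + 1 by simp at hp; omega, List.replicate_succ']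
  simp

theorem harm_singleton_replicate (k c m : ℕ) :
    harm [c] (List.replicate m k) = insertSum k c (m + 1) + insertSum k (c + k) m := by
  induction m with
  | zero => simp [harm_nil_right, insertSum]
  | succ m ih =>
    rw [List.replicate_succ', ← List.nil_append [c], harm_append_singleton, List.nil_append, ih,
      harm_nil_left, harm_nil_left, insertSum_succ' k c (m + 1), insertSum_succ' k (c + k) m,
      mapDomain_add, mapDomain_single, mapDomain_single, ← List.replicate_succ']
    abel

theorem sum_range_neg_one_pow_smul_harm_singleton (k c n : ℕ) :
    ∑ i ∈ range n, (-1 : ℚ) ^ i • harm [c + i * k] (List.replicate (n - 1 - i) k)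
      = insertSum k c n :=
  sum_range_neg_one_pow_smul_telescope k (fun c m => harm [c] (List.replicate m k)) (insertSum k)
    (insertSum_zero k) (harm_singleton_replicate k) c n

noncomputable def harmAppendSum (k a b n : ℕ) : Ical :=
  ∑ s ∈ range n, mapDomain (· ++ b :: List.replicate s k) (harm [a] (List.replicate (n - 1 - s) k))

theorem harmAppendSum_zero (k a b : ℕ) : harmAppendSum k a b 0 = 0 := by
  simp [harmAppendSum]

theorem harmAppendSum_succ (k a b n : ℕ) :
    harmAppendSum k a b (n + 1)
      = mapDomain (· ++ [b]) (harm [a] (List.replicate n k))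
        + mapDomain (· ++ [k]) (harmAppendSum k a b n) := by
  rw [harmAppendSum, sum_range_succ', harmAppendSum, mapDomain_finsetSum, add_comm]
  simp only [List.replicate_zero, Nat.add_sub_cancel, Nat.sub_zero]
  congr 1
  refine sum_congr rfl fun s _ => ?_
  rw [← mapDomain_comp, show n - (s + 1) = n - 1 - s by omega]
  congr 1
  funext l
  simp [List.replicate_succ']

theorem harm_pair_replicate (k a b n : ℕ) :
    harm [a, b] (List.replicate n k)
      = harmAppendSum k a b (n + 1) + harmAppendSum k a (b + k) n := by
  induction n generalizing b with
  | zero => simp [harm_nil_right, harmAppendSum, mapDomain_single]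
  | succ n ih =>
    rw [List.replicate_succ', show [a, b] = [a] ++ [b] from rfl, harm_append_singleton,
      List.singleton_append, ih, ← List.replicate_succ', harmAppendSum_succ k a b (n + 1),
      harmAppendSum_succ k a (b + k) n, mapDomain_add]
    abel

theorem sum_range_neg_one_pow_smul_harm_pair (k a b n : ℕ) :
    ∑ j ∈ range n, (-1 : ℚ) ^ j • harm [a, b + j * k] (List.replicate (n - 1 - j) k)
      = harmAppendSum k a b n :=
  sum_range_neg_one_pow_smul_telescope k (fun b m => harm [a, b] (List.replicate m k))
    (harmAppendSum k a) (harmAppendSum_zero k a) (harm_pair_replicate k a) b n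

noncomputable def insertSum₂ (k c n : ℕ) : Ical :=
  ∑ s ∈ range n, mapDomain (· ++ c :: List.replicate s k) (insertSum k c (n - 1 - s))

theorem insertSum₂_succ (k c n : ℕ) :
    insertSum₂ k c (n + 1)
      = mapDomain (k :: ·) (insertSum₂ k c n) + mapDomain (c :: ·) (insertSum k c n) := by
  have hterm : ∀ s ∈ range n,
      mapDomain (· ++ c :: List.replicate s k) (insertSum k c (n - s))
        = mapDomain (k :: ·) (mapDomain (· ++ c :: List.replicate s k) (insertSum k c (n - 1 - s)))
          + single (c :: List.replicate (n - 1 - s) k ++ c :: List.replicate s k) 1 := by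
    intro s hs
    rw [show n - s = n - 1 - s + 1 by simp at hs; omega, insertSum_succ, mapDomain_add,
      mapDomain_single, ← mapDomain_comp, ← mapDomain_comp]
    rfl
  have hreflect : ∑ s ∈ range n,
      (single (c :: List.replicate (n - 1 - s) k ++ c :: List.replicate s k) 1 : Ical)
        = mapDomain (c :: ·) (insertSum k c n) := by
    rw [insertSum, mapDomain_finsetSum, ← sum_range_reflect]
    refine sum_congr rfl fun s hs => ?_
    rw [mapDomain_single, show n - 1 - (n - 1 - s) = s by simp at hs; omega]
    rfl
  rw [insertSum₂, sum_range_succ, Nat.add_sub_cancel, Nat.sub_self, insertSum_zero, mapDomain_zero,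
    add_zero, sum_congr rfl hterm, sum_add_distrib, hreflect, insertSum₂, mapDomain_finsetSum]

theorem sigma_zero_s9 (l : Idx) : sigma 0 l = single l 1 := by
  induction l with
  | nil => simp [sigma]
  | cons a l ih => simp [sigma, ih, mapDomain_single]

theorem sigma_one_replicate (k n : ℕ) :
    sigma 1 (List.replicate n k) = (k : ℚ) • insertSum k (k + 1) n := by
  induction n with
  | zero => simp [sigma, insertSum_zero]
  | succ n ih =>
    rw [List.replicate_succ, sigma]
    simp only [sum_range_succ, sum_range_zero, zero_add, add_zero, Nat.sub_zero, Nat.sub_self,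
      Nat.choose_zero_right, Nat.add_sub_cancel, Nat.choose_one_right, Nat.cast_one, one_smul, ih,
      sigma_zero_s9, insertSum_succ, mapDomain_smul, mapDomain_single]
    module

theorem sigma_two_replicate (k n : ℕ) :
    sigma 2 (List.replicate n k)
      = ((k + 1).choose 2 : ℚ) • insertSum k (k + 2) n + (k : ℚ) ^ 2 • insertSum₂ k (k + 1) n := by
  induction n with
  | zero => simp [sigma, insertSum_zero, insertSum₂]
  | succ n ih =>
    rw [List.replicate_succ, sigma]
    simp only [sum_range_succ, sum_range_zero, zero_add, add_zero, Nat.sub_zero, Nat.sub_self,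
      Nat.choose_zero_right, Nat.add_sub_cancel, Nat.choose_one_right, Nat.cast_one, one_smul,
      Nat.add_succ_sub_one, show 2 - 1 = 1 from rfl, ih, sigma_one_replicate, sigma_zero_s9,
      insertSum_succ, insertSum₂_succ, mapDomain_add, mapDomain_smul, mapDomain_single]
    module

theorem sum_sum_neg_one_pow_smul_harm_pair (k c n : ℕ) :
    ∑ i ∈ range (n - 1), ∑ j ∈ range (n - 1 - i),
        (-1 : ℚ) ^ (i + j) • harm [c + i * k, c + j * k] (List.replicate (n - 2 - i - j) k)
      = insertSum₂ k c n := by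
  have hinner : ∀ i ∈ range (n - 1), ∑ j ∈ range (n - 1 - i),
        (-1 : ℚ) ^ (i + j) • harm [c + i * k, c + j * k] (List.replicate (n - 2 - i - j) k)
      = ∑ s ∈ range (n - 1 - i), (-1 : ℚ) ^ i •
          mapDomain (· ++ c :: List.replicate s k)
            (harm [c + i * k] (List.replicate (n - 2 - i - s) k)) := by
    intro i _
    calc _ = (-1 : ℚ) ^ i • ∑ j ∈ range (n - 1 - i),
            (-1 : ℚ) ^ j • harm [c + i * k, c + j * k] (List.replicate (n - 1 - i - 1 - j) k) := by
          rw [Finset.smul_sum]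
          refine sum_congr rfl fun j _ => ?_
          rw [smul_smul, pow_add, show n - 2 - i - j = n - 1 - i - 1 - j by omega]
      _ = (-1 : ℚ) ^ i • harmAppendSum k (c + i * k) c (n - 1 - i) := by
          rw [sum_range_neg_one_pow_smul_harm_pair]
      _ = _ := by
          rw [harmAppendSum, Finset.smul_sum]
          refine sum_congr rfl fun s _ => ?_
          rw [show n - 1 - i - 1 - s = n - 2 - i - s by omega]
  have hcolumn : ∀ s ∈ range (n - 1), ∑ i ∈ range (n - 1 - s), (-1 : ℚ) ^ i •
        mapDomain (· ++ c :: List.replicate s k)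
          (harm [c + i * k] (List.replicate (n - 2 - i - s) k))
      = mapDomain (· ++ c :: List.replicate s k) (insertSum k c (n - 1 - s)) := by
    intro s _
    rw [← sum_range_neg_one_pow_smul_harm_singleton, mapDomain_finsetSum]
    refine sum_congr rfl fun i _ => ?_
    rw [mapDomain_smul, show n - 1 - s - 1 - i = n - 2 - i - s by omega]
  rw [sum_congr rfl hinner, sum_comm' (t' := range (n - 1)) (s' := fun s => range (n - 1 - s))
    (by intro i s; simp only [mem_range]; omega), sum_congr rfl hcolumn]
  rcases n with _ | n
  · simp [insertSum₂]
  · rw [insertSum₂, sum_range_succ, Nat.add_sub_cancel, Nat.sub_self, insertSum_zero,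
      mapDomain_zero, add_zero]

theorem sigma2_replicate_general (k n : ℕ) :
    sigma 2 (List.replicate n k)
      = ((k : ℚ) * (k + 1) / 2) •
          (∑ i ∈ Finset.range n,
            ((-1 : ℚ)) ^ i • harm [k * (i + 1) + 2] (List.replicate (n - i - 1) k))
        + ((k : ℚ) ^ 2) •
          (∑ i ∈ Finset.range (n - 1), ∑ j ∈ Finset.range (n - 1 - i),
            ((-1 : ℚ)) ^ (i + j) •
              harm [k * (i + 1) + 1, k * (j + 1) + 1]
                (List.replicate (n - i - j - 2) k)) := by
  have hsingle : ∑ i ∈ range n, (-1 : ℚ) ^ i • harm [k * (i + 1) + 2] (List.replicate (n - i - 1) k)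
      = insertSum k (k + 2) n := by
    rw [← sum_range_neg_one_pow_smul_harm_singleton]
    refine sum_congr rfl fun i _ => ?_
    rw [show k * (i + 1) + 2 = k + 2 + i * k by ring, show n - i - 1 = n - 1 - i by omega]
  have hpair : ∑ i ∈ range (n - 1), ∑ j ∈ range (n - 1 - i), (-1 : ℚ) ^ (i + j) •
        harm [k * (i + 1) + 1, k * (j + 1) + 1] (List.replicate (n - i - j - 2) k)
      = insertSum₂ k (k + 1) n := by
    rw [← sum_sum_neg_one_pow_smul_harm_pair]
    refine sum_congr rfl fun i _ => sum_congr rfl fun j _ => ?_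
    rw [show k * (i + 1) + 1 = k + 1 + i * k by ring, show k * (j + 1) + 1 = k + 1 + j * k by ring,
      show n - i - j - 2 = n - 2 - i - j by omega]
  rw [sigma_two_replicate, hsingle, hpair, Nat.cast_choose_two]
  congr 2
  push_cast
  ring

/-- σ₂({k}ⁿ) = (k(k+1)/2) ∑_{i=0}^{n-1} (-1)ⁱ (k(i+1)+2)*({k}^{n-i-1})
 + k² ∑_{i+j≤n-2} (-1)^{i+j} (k(i+1)+1, k(j+1)+1)*({k}^{n-i-j-2}). -/
theorem sigma2_replicate (k n : ℕ) (hk : 0 < k) (hn : 0 < n) :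
    sigma 2 (List.replicate n k)
      = ((k : ℚ) * (k + 1) / 2) •
          (∑ i ∈ Finset.range n,
            ((-1 : ℚ)) ^ i • harm [k * (i + 1) + 2] (List.replicate (n - i - 1) k))
        + ((k : ℚ) ^ 2) •
          (∑ i ∈ Finset.range (n - 1), ∑ j ∈ Finset.range (n - 1 - i),
            ((-1 : ℚ)) ^ (i + j) •
              harm [k * (i + 1) + 1, k * (j + 1) + 1]
                (List.replicate (n - i - j - 2) k)) :=
  sigma2_replicate_general k n
end
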